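/- Let I = [α_I, α'_I) and J = [α_J, α'_J) be adjacent half-open intervals with α'_I = α_J, carrying cutoff radii ε_I, ε'_I > 0 and ε_J, ε'_J > 0 respectively, which satisfy ε_I + ε'_I ≤ |I|, ε_J + ε'_J ≤ |J|, and the compatibility ε'_I = ε_J. Then for every f ∈ L²(ℝ) and almost every ξ ∈ [α_I + ε_I, α'_J − ε'_J] one has (𝒫_I f)^(ξ) + (𝒫_J f)^(ξ) = f̂(ξ). -/

import Mathlib

open MeasureTheory

noncomputable section

/-- The bell function of the interval `[l, r)` with cutoff radii `εl, εr`: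
`b(ξ) = ρ((ξ−l)/εl) · ρ((r−ξ)/εr)`. -/
def bell (ρ : ℝ → ℝ) (l r εl εr ξ : ℝ) : ℝ := ρ ((ξ - l) / εl) * ρ ((r - ξ) / εr)

/-- The operator `𝒫_I` read on the Fourier side: if `g = f̂`, then `(𝒫_I f)^ = fourierSide ρ l r εl εr g`,
i.e. `(𝒫_I f)^(ξ) = b_I(ξ)[b_I(ξ) f̂(ξ) + b_I(2α_I−ξ) f̂(2α_I−ξ) − b_I(2α'_I−ξ) f̂(2α'_I−ξ)]`. -/
def fourierSideP (ρ : ℝ → ℝ) (l r εl εr : ℝ) (g : ℝ → ℂ) (ξ : ℝ) : ℂ :=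
  (bell ρ l r εl εr ξ : ℝ) *
    ((bell ρ l r εl εr ξ : ℝ) * g ξ +
      (bell ρ l r εl εr (2 * l - ξ) : ℝ) * g (2 * l - ξ) -
      (bell ρ l r εl εr (2 * r - ξ) : ℝ) * g (2 * r - ξ))

/-- for adjacent compatible intervals `I = [α_I, α'_I)`, `J = [α_J, α'_J)`
(`α'_I = α_J`, `ε'_I = ε_J`) one has `(𝒫_I f)^(ξ) + (𝒫_J f)^(ξ) = f̂(ξ)` for a.e.
`ξ ∈ [α_I + ε_I, α'_J − ε'_J]` and every `f ∈ L²(ℝ)`.  Since the operators `𝒫_I` are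
defined on the Fourier side and the Fourier transform is unitary on `L²(ℝ)`, this is
stated for `g = f̂` ranging over `L²(ℝ)`. -/
theorem stmt11 (ρ : ℝ → ℝ) (hρsmooth : ContDiff ℝ (⊤ : ℕ∞) ρ)
    (hρ0 : ∀ ξ : ℝ, ξ ≤ -1 → ρ ξ = 0) (hρ1 : ∀ ξ : ℝ, 1 ≤ ξ → ρ ξ = 1)
    (hρpyth : ∀ ξ : ℝ, ρ ξ ^ 2 + ρ (-ξ) ^ 2 = 1)
    (αI αI' αJ αJ' εI εI' εJ εJ' : ℝ)
    (hII : αI < αI') (hJJ : αJ < αJ') (hadj : αI' = αJ)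
    (hεI : 0 < εI) (hεI' : 0 < εI') (hεJ : 0 < εJ) (hεJ' : 0 < εJ')
    (hsumI : εI + εI' ≤ αI' - αI) (hsumJ : εJ + εJ' ≤ αJ' - αJ)
    (hcompat : εI' = εJ) (g : ℝ → ℂ) (hg : MemLp g 2 volume) :
    ∀ᵐ ξ : ℝ, ξ ∈ Set.Icc (αI + εI) (αJ' - εJ') →
      fourierSideP ρ αI αI' εI εI' g ξ + fourierSideP ρ αJ αJ' εJ εJ' g ξ = g ξ := by
  refine Filter.Eventually.of_forall fun ξ hξ => ?_
  obtain ⟨h1, h2⟩ := hξ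
  rw [hadj, hcompat] at hsumI ⊢
  simp only [fourierSideP, bell]
  rw [show 2 * αI - ξ - αI = αI - ξ from by ring,
      show αJ - (2 * αJ - ξ) = ξ - αJ from by ring,
      show 2 * αJ - ξ - αJ = αJ - ξ from by ring,
      show αJ' - (2 * αJ' - ξ) = ξ - αJ' from by ring]
  have hA1 : ρ ((ξ - αI) / εI) = 1 := hρ1 _ ((one_le_div hεI).mpr (by linarith))
  have hA3 : ρ ((αI - ξ) / εI) = 0 := hρ0 _ ((div_le_iff₀ hεI).mpr (by linarith))
  have hB2 : ρ ((αJ' - ξ) / εJ') = 1 := hρ1 _ ((one_le_div hεJ').mpr (by linarith))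
  have hB6 : ρ ((ξ - αJ') / εJ') = 0 := hρ0 _ ((div_le_iff₀ hεJ').mpr (by linarith))
  rw [hA1, hA3, hB2, hB6]
  have hab := hρpyth ((ξ - αJ) / εJ)
  rw [show -((ξ - αJ) / εJ) = (αJ - ξ) / εJ from by ring] at hab
  rcases le_or_gt ξ (αJ - εJ) with hc | hc
  · have ha : ρ ((ξ - αJ) / εJ) = 0 := hρ0 _ ((div_le_iff₀ hεJ).mpr (by linarith))
    have hb : ρ ((αJ - ξ) / εJ) = 1 := hρ1 _ ((one_le_div hεJ).mpr (by linarith))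
    rw [ha, hb]; push_cast; ring
  · rcases le_or_gt ξ (αJ + εJ) with hc2 | hc2
    · have hA5 : ρ ((2 * αJ - ξ - αI) / εI) = 1 :=
        hρ1 _ ((one_le_div hεI).mpr (by linarith))
      have hB4 : ρ ((αJ' - (2 * αJ - ξ)) / εJ') = 1 :=
        hρ1 _ ((one_le_div hεJ').mpr (by linarith))
      rw [hA5, hB4]
      have habC : ((ρ ((ξ - αJ) / εJ) : ℝ) : ℂ) ^ 2 + ((ρ ((αJ - ξ) / εJ) : ℝ) : ℂ) ^ 2 = 1 := by
        exact_mod_cast hab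
      push_cast
      linear_combination g ξ * habC
    · have ha : ρ ((ξ - αJ) / εJ) = 1 := hρ1 _ ((one_le_div hεJ).mpr (by linarith))
      have hb : ρ ((αJ - ξ) / εJ) = 0 := hρ0 _ ((div_le_iff₀ hεJ).mpr (by linarith))
      rw [ha, hb]; push_cast; ring
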